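/- For |q| < 1 and complex a with |a| < 1, the product P(a,q) = ( ∏_{n=0}^∞ (1 + a q^n) / ∏_{n=0}^∞ (1 - a q^n) )² satisfies log P(a,q) = 4 ∑_{n=0}^∞ a^{2n+1} / ((2n+1)(1 - q^{2n+1})). -/

import Mathlib

/-!
Writing `x n = a * q ^ n`, the logarithm of the ratio of the two products is
`∑ₙ (log (1 + x n) - log (1 - x n)) = ∑ₙ ∑ₘ 2 x n ^ (2m+1) / (2m+1)`.
The double series converges absolutely, so the order of summation may be exchanged, and the inner
sums over `n` are geometric: `∑ₙ (a q ^ n) ^ (2m+1) = a ^ (2m+1) / (1 - q ^ (2m+1))`.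
-/

open Real

section OddLogSeries

variable {ι : Type*} {x : ι → ℝ}

lemma summable_log_one_sub_of_summable (hx : Summable x) :
    Summable fun i ↦ log (1 - x i) := by
  simpa [sub_eq_add_neg] using Real.summable_log_one_add_of_summable hx.neg

lemma log_tprod_one_add_div_tprod_one_sub (hx1 : ∀ i, |x i| < 1) (hx : Summable x) :
    log ((∏' i, (1 + x i)) / ∏' i, (1 - x i)) = ∑' i, (log (1 + x i) - log (1 - x i)) := by
  have hplus : ∀ i, 0 < 1 + x i := fun i ↦ by linarith [(abs_lt.mp (hx1 i)).1]
  have hminus : ∀ i, 0 < 1 - x i := fun i ↦ by linarith [(abs_lt.mp (hx1 i)).2]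
  have hsum_plus := Real.summable_log_one_add_of_summable hx
  have hsum_minus := summable_log_one_sub_of_summable hx
  rw [← rexp_tsum_eq_tprod hplus hsum_plus, ← rexp_tsum_eq_tprod hminus hsum_minus, ← exp_sub,
    log_exp, hsum_plus.tsum_sub hsum_minus]

lemma summable_odd_log_series (hx1 : ∀ i, |x i| < 1) (hx : Summable x) :
    Summable fun p : ι × ℕ ↦ 2 * (1 / (2 * (p.2 : ℝ) + 1)) * x p.1 ^ (2 * p.2 + 1) := by
  have hnorm : ∀ i (m : ℕ), ‖2 * (1 / (2 * (m : ℝ) + 1)) * x i ^ (2 * m + 1)‖ =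
      2 * (1 / (2 * (m : ℝ) + 1)) * |x i| ^ (2 * m + 1) := fun i m ↦ by
    rw [norm_mul, norm_pow, Real.norm_eq_abs, Real.norm_eq_abs,
      abs_of_nonneg (by positivity : (0 : ℝ) ≤ 2 * (1 / (2 * (m : ℝ) + 1)))]
  have hrow : ∀ i, HasSum (fun m : ℕ ↦ ‖2 * (1 / (2 * (m : ℝ) + 1)) * x i ^ (2 * m + 1)‖)
      (log (1 + |x i|) - log (1 - |x i|)) := fun i ↦ by
    simpa only [hnorm] using hasSum_log_sub_log_of_abs_lt_one ((abs_abs (x i)).symm ▸ hx1 i)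
  -- the absolute row sums are again of the form `log (1 + y i) - log (1 - y i)`, now with `y = |x|`
  refine .of_norm ((summable_prod_of_nonneg fun _ ↦ norm_nonneg _).mpr
    ⟨fun i ↦ (hrow i).summable, ?_⟩)
  simp only [fun i ↦ (hrow i).tsum_eq]
  exact (Real.summable_log_one_add_of_summable hx.abs).sub
    (summable_log_one_sub_of_summable hx.abs)

theorem tsum_log_one_add_sub_log_one_sub (hx1 : ∀ i, |x i| < 1) (hx : Summable x) :
    ∑' i, (log (1 + x i) - log (1 - x i)) =
      ∑' m : ℕ, 2 * (1 / (2 * (m : ℝ) + 1)) * ∑' i, x i ^ (2 * m + 1) :=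
  calc ∑' i, (log (1 + x i) - log (1 - x i))
      = ∑' i, ∑' m : ℕ, 2 * (1 / (2 * (m : ℝ) + 1)) * x i ^ (2 * m + 1) :=
        tsum_congr fun i ↦ (hasSum_log_sub_log_of_abs_lt_one (hx1 i)).tsum_eq.symm
    _ = ∑' m : ℕ, ∑' i, 2 * (1 / (2 * (m : ℝ) + 1)) * x i ^ (2 * m + 1) :=
        (summable_odd_log_series hx1 hx).tsum_comm.symm
    _ = _ := tsum_congr fun _ ↦ tsum_mul_left

end OddLogSeries

lemma tsum_mul_geometric_pow (a : ℝ) {q : ℝ} (hq : |q| < 1) {k : ℕ} (hk : k ≠ 0) :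
    ∑' n : ℕ, (a * q ^ n) ^ k = a ^ k / (1 - q ^ k) := by
  have hqk : |q ^ k| < 1 := by
    rw [abs_pow]
    exact pow_lt_one₀ (abs_nonneg q) hq hk
  simp_rw [mul_pow, ← pow_mul, mul_comm _ k, pow_mul]
  rw [tsum_mul_left, tsum_geometric_of_abs_lt_one hqk, div_eq_mul_inv]

theorem log_q_product_ratio (q a : ℝ) (hq : |q| < 1) (ha : |a| < 1) :
    Real.log (((∏' n : ℕ, (1 + a * q ^ n)) / ∏' n : ℕ, (1 - a * q ^ n)) ^ 2) =
      4 * ∑' n : ℕ, a ^ (2 * n + 1) / ((2 * (n : ℝ) + 1) * (1 - q ^ (2 * n + 1))) := by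
  have hx1 : ∀ n : ℕ, |a * q ^ n| < 1 := fun n ↦ by
    rw [abs_mul, abs_pow]
    exact mul_lt_one_of_nonneg_of_lt_one_left (abs_nonneg a) ha
      (pow_le_one₀ (abs_nonneg q) hq.le)
  have hx : Summable fun n : ℕ ↦ a * q ^ n := (summable_geometric_of_abs_lt_one hq).mul_left a
  rw [log_pow, log_tprod_one_add_div_tprod_one_sub hx1 hx,
    tsum_log_one_add_sub_log_one_sub hx1 hx, ← tsum_mul_left, ← tsum_mul_left]
  refine tsum_congr fun m ↦ ?_
  rw [tsum_mul_geometric_pow a hq (by omega)]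
  rw [← div_div]
  ring
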